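/- arXiv:2002.04968 — 2 statements merged into one kernel-verified Lean document; each statement's English description precedes it below -/
import Mathlib

section
/- Let $U = \Delta^2$ be the unit bidisk in $\mathbb{C}^2$, let $\phi(z) = \log|z_1 - z_2|^2$, and let $f$ be the holomorphic function on $V = \{z_1 z_2 = 0\} \cap U$ defined by $f = z_1$ on $\{z_2 = 0\}$ and $f = 0$ on $\{z_1 = 0\}$. Then there is no holomorphic function $H$ on $U$ with $H|_V = f$ and $\int_U |H|^2 e^{-\phi}\, d\lambda < \infty$. Indeed, any extension must have the form $H = z_1 G$ with $G$ holomorphic, finiteness of the weighted norm forces $G = 0$ on $\{z_1 = z_2\}$, and then $H$ vanishes to order $\geq 2$ at the origin, contradicting $\partial H/\partial z_1(0) = 1$. -/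
/-!
If `H` did not vanish at a diagonal point, the weight `|z₁ - z₂|⁻²` would be integrable near it;
by Fubini almost every slice `y ↦ |x - y|⁻²` would then be integrable near `x`, which fails because
`ℂ` has real dimension `2`. Hence `H` vanishes on the diagonal, and the differential `L` of `H` at
the origin satisfies `L(1,0) = 1`, `L(0,1) = 0` and `L(1,1) = 0`, contradicting linearity.
-/

open MeasureTheory Metric Complex Set

open Filter Topology

section AddHaar

variable {E : Type*} [NormedAddCommGroup E] [NormedSpace ℝ E] [Nontrivial E]
  [FiniteDimensional ℝ E] [MeasurableSpace E] [BorelSpace E] (μ : Measure E) [μ.IsAddHaarMeasure]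

theorem integrableOn_ball_norm_rpow_iff {r s : ℝ} (hr : 0 < r) :
    IntegrableOn (fun x : E => ‖x‖ ^ s) (ball 0 r) μ ↔ -(Module.finrank ℝ E : ℝ) < s := by
  have hd : 1 ≤ Module.finrank ℝ E := Module.finrank_pos
  rw [integrableOn_fun_norm_addHaar μ (f := fun y => y ^ s),
    integrableOn_congr_fun (g := fun y => y ^ ((Module.finrank ℝ E : ℝ) - 1 + s)) _
      measurableSet_Ioo, intervalIntegral.integrableOn_Ioo_rpow_iff hr]
  · constructor <;> intro h <;> linarith
  · intro y hy
    dsimp only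
    rw [smul_eq_mul, Real.rpow_add hy.1, ← Real.rpow_natCast, Nat.cast_sub hd, Nat.cast_one]

theorem not_integrableOn_norm_sub_rpow_neg_finrank {c : E} {s : Set E} (hs : s ∈ 𝓝 c) :
    ¬ IntegrableOn (fun x => ‖x - c‖ ^ (-(Module.finrank ℝ E : ℝ))) s μ := by
  intro h
  obtain ⟨r, hr, hrs⟩ := Metric.mem_nhds_iff.mp hs
  have hball : IntegrableOn (fun x => ‖x - c‖ ^ (-(Module.finrank ℝ E : ℝ))) (ball c r) μ :=
    h.mono_set hrs
  rw [← (measurePreserving_add_right μ c).integrableOn_comp_preimage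
    (measurableEmbedding_addRight c)] at hball
  simp only [Function.comp_def, add_sub_cancel_right, preimage_add_right_ball, sub_self] at hball
  exact lt_irrefl _ ((integrableOn_ball_norm_rpow_iff μ hr).mp hball)

end AddHaar

theorem not_integrableOn_inv_norm_sub_sq {U : Set (ℂ × ℂ)} {a : ℂ} (hU : U ∈ 𝓝 (a, a)) :
    ¬ IntegrableOn (fun z : ℂ × ℂ => 1 / ‖z.1 - z.2‖ ^ 2) U := by
  intro h
  obtain ⟨r, hr, hrU⟩ := Metric.mem_nhds_iff.mp hU
  rw [← ball_prod_same] at hrU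
  have hprod := h.mono_set hrU
  rw [IntegrableOn, Measure.volume_eq_prod, ← Measure.prod_restrict] at hprod
  have : (ae (volume.restrict (ball a r))).NeBot :=
    ae_restrict_neBot.mpr (measure_ball_pos volume a hr).ne'
  obtain ⟨x, hx, hslice⟩ :=
    ((ae_restrict_mem measurableSet_ball).and hprod.prod_right_ae).exists
  refine not_integrableOn_norm_sub_rpow_neg_finrank volume (isOpen_ball.mem_nhds hx)
    (IntegrableOn.congr_fun hslice (fun y _ => ?_) measurableSet_ball)
  rw [Complex.finrank_real_complex, norm_sub_rev, Real.rpow_neg (norm_nonneg _), one_div]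
  norm_cast

theorem apply_eq_zero_of_integrableOn_div_norm_sub_sq {E : Type*} [NormedAddCommGroup E]
    {H : ℂ × ℂ → E} {U : Set (ℂ × ℂ)} {a : ℂ} (hU : U ∈ 𝓝 (a, a)) (hH : ContinuousAt H (a, a))
    (hint : IntegrableOn (fun z => ‖H z‖ ^ 2 / ‖z.1 - z.2‖ ^ 2) U) : H (a, a) = 0 := by
  by_contra hne
  set m := ‖H (a, a)‖ ^ 2 / 2
  have hm : 0 < m := by positivity
  have hcont : ContinuousAt (fun z => ‖H z‖ ^ 2) (a, a) := hH.norm.pow 2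
  obtain ⟨V, hVH, hV, haV⟩ := _root_.eventually_nhds_iff.mp
    ((hcont.eventually (eventually_gt_nhds (half_lt_self (by positivity)))).and hU)
  refine not_integrableOn_inv_norm_sub_sq (hV.mem_nhds haV) <|
    ((hint.mono_set fun z hz => (hVH z hz).2).const_mul m⁻¹).mono'
      (Measurable.aestronglyMeasurable (by fun_prop)) ?_
  filter_upwards [ae_restrict_mem hV.measurableSet] with z hz
  rw [Real.norm_of_nonneg (by positivity)]
  calc 1 / ‖z.1 - z.2‖ ^ 2 = m⁻¹ * (m / ‖z.1 - z.2‖ ^ 2) := by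
        rw [mul_div_assoc', inv_mul_cancel₀ hm.ne']
    _ ≤ m⁻¹ * (‖H z‖ ^ 2 / ‖z.1 - z.2‖ ^ 2) := by
        gcongr
        exact (hVH z hz).1.le

theorem fderiv_apply_eq_deriv_of_eventuallyEq {𝕜 E F : Type*} [NontriviallyNormedField 𝕜]
    [NormedAddCommGroup E] [NormedSpace 𝕜 E] [NormedAddCommGroup F] [NormedSpace 𝕜 F]
    {H : E → F} {x v : E} {g : 𝕜 → F} (hH : DifferentiableAt 𝕜 H x)
    (hg : (fun t : 𝕜 => H (x + t • v)) =ᶠ[𝓝 0] g) : fderiv 𝕜 H x v = deriv g 0 := by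
  rw [← hH.lineDeriv_eq_fderiv, lineDeriv, hg.deriv_eq]

/-- Claim 3 (Ohsawa's example): with weight `φ = log|z₁ - z₂|²` on the unit bidisk,
the function on `V = {z₁ z₂ = 0}` equal to `z₁` on `{z₂ = 0}` and `0` on `{z₁ = 0}`
admits no holomorphic extension `H` with `∫_U |H|² e^{-φ} dλ < ∞`. -/
theorem statement6 :
    ¬ ∃ H : ℂ × ℂ → ℂ,
      DifferentiableOn ℂ H (ball (0:ℂ) 1 ×ˢ ball (0:ℂ) 1) ∧
      (∀ z₁ ∈ ball (0:ℂ) 1, H (z₁, 0) = z₁) ∧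
      (∀ z₂ ∈ ball (0:ℂ) 1, H (0, z₂) = 0) ∧
      IntegrableOn (fun z : ℂ × ℂ => ‖H z‖ ^ 2 / ‖z.1 - z.2‖ ^ 2)
        (ball (0:ℂ) 1 ×ˢ ball (0:ℂ) 1) := by
  rintro ⟨H, hH, hH₁, hH₂, hint⟩
  have hU : ∀ a ∈ ball (0:ℂ) 1, ball (0:ℂ) 1 ×ˢ ball (0:ℂ) 1 ∈ 𝓝 (a, a) := fun a ha =>
    (isOpen_ball.prod isOpen_ball).mem_nhds ⟨ha, ha⟩
  have hdiag : ∀ a ∈ ball (0:ℂ) 1, H (a, a) = 0 := fun a ha =>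
    apply_eq_zero_of_integrableOn_div_norm_sub_sq (hU a ha)
      (hH.continuousOn.continuousAt (hU a ha)) hint
  have hD : DifferentiableAt ℂ H 0 := hH.differentiableAt (hU 0 (mem_ball_self one_pos))
  have hball := ball_mem_nhds (0:ℂ) one_pos
  have h₁₀ : fderiv ℂ H 0 (1, 0) = 1 := by
    rw [fderiv_apply_eq_deriv_of_eventuallyEq hD (g := id), deriv_id]
    filter_upwards [hball] with t ht
    simpa using hH₁ t ht
  have h₀₁ : fderiv ℂ H 0 (0, 1) = 0 := by
    rw [fderiv_apply_eq_deriv_of_eventuallyEq hD (g := fun _ => 0), deriv_const]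
    filter_upwards [hball] with t ht
    simpa using hH₂ t ht
  have h₁₁ : fderiv ℂ H 0 (1, 1) = 0 := by
    rw [fderiv_apply_eq_deriv_of_eventuallyEq hD (g := fun _ => 0), deriv_const]
    filter_upwards [hball] with t ht
    simpa using hdiag t ht
  have hsplit : ((1:ℂ), (1:ℂ)) = (1, 0) + (0, 1) := by simp
  rw [hsplit, map_add, h₁₀, h₀₁] at h₁₁
  norm_num at h₁₁
end

section
/- Any holomorphic $H$ on the unit bidisk $U$ with $\int_U |H|^2 |z_1 - z_2|^{-2} d\lambda < \infty$ vanishes identically on the diagonal $\{z_1 = z_2\} \cap U$. -/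
open MeasureTheory Metric Complex Set

lemma aux_notint (c : ℂ) {δ : ℝ} (hδ : 0 < δ) :
    ¬ IntegrableOn (fun w : ℂ => 1 / ‖w - c‖ ^ 2) (ball c δ) := by
  intro h
  have hfin := h.2
  rw [HasFiniteIntegral] at hfin
  set r : ℕ → ℝ := fun n => δ / 2 ^ n with hr
  have hrpos : ∀ n, 0 < r n := fun n => div_pos hδ (by positivity)
  have hrmono : ∀ {m n : ℕ}, m ≤ n → r n ≤ r m := by
    intro m n hmn
    exact div_le_div_of_nonneg_left hδ.le (by positivity)
      (pow_le_pow_right₀ one_le_two hmn)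
  have hhalf : ∀ n, r (n + 1) = r n / 2 := by
    intro n; simp only [hr, pow_succ]; ring
  set A : ℕ → Set ℂ := fun n => ball c (r n) \ ball c (r (n + 1)) with hA
  have hAmeas : ∀ n, MeasurableSet (A n) :=
    fun n => measurableSet_ball.diff measurableSet_ball
  have hAsub : ∀ n, A n ⊆ ball c δ := by
    intro n
    have h0 : r 0 = δ := by simp [hr]
    exact diff_subset.trans (ball_subset_ball (h0 ▸ hrmono (Nat.zero_le n)))
  have hdisj : Pairwise (Function.onFun Disjoint A) := by
    have key : ∀ m n, m < n → Disjoint (A m) (A n) := by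
      intro m n hmn
      refine Set.disjoint_left.2 fun w hwm hwn => ?_
      exact hwm.2 (ball_subset_ball (hrmono hmn) hwn.1)
    intro m n hmn
    rcases hmn.lt_or_gt with h' | h'
    · exact key _ _ h'
    · exact (key _ _ h').symm
  have hball : ∀ t : ℝ, 0 ≤ t →
      volume (ball c t) = ENNReal.ofReal (t ^ 2) * NNReal.pi := by
    intro t ht; rw [Complex.volume_ball, ← ENNReal.ofReal_pow ht]
  have hvol : ∀ n, volume (A n) = ENNReal.ofReal ((3 / 4) * r n ^ 2) * NNReal.pi := by
    intro n
    rw [hA]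
    rw [measure_diff (ball_subset_ball (hrmono n.le_succ))
        measurableSet_ball.nullMeasurableSet measure_ball_lt_top.ne,
      hball _ (hrpos _).le, hball _ (hrpos _).le,
      ← ENNReal.sub_mul (fun _ _ => ENNReal.coe_ne_top),
      ← ENNReal.ofReal_sub _ (sq_nonneg _)]
    congr 2
    rw [hhalf]
    ring
  have hterm : ∀ n, ENNReal.ofReal (3 / 4) * NNReal.pi ≤
      ∫⁻ w in A n, ‖(1:ℝ) / ‖w - c‖ ^ 2‖₊ := by
    intro n
    have hpt : ∀ w ∈ A n, ENNReal.ofReal ((r n)⁻¹ ^ 2) ≤ (‖(1:ℝ) / ‖w - c‖ ^ 2‖₊ : ENNReal) := by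
      intro w hw
      have h1 : ‖w - c‖ < r n := by
        have := hw.1; rw [mem_ball, dist_eq_norm] at this; exact this
      have h2 : 0 < ‖w - c‖ := by
        have := hw.2; rw [mem_ball, dist_eq_norm, not_lt] at this
        exact lt_of_lt_of_le (hrpos (n + 1)) this
      have hle : (r n)⁻¹ ^ 2 ≤ 1 / ‖w - c‖ ^ 2 := by
        rw [one_div, ← inv_pow]
        gcongr
      calc ENNReal.ofReal ((r n)⁻¹ ^ 2) ≤ ENNReal.ofReal (1 / ‖w - c‖ ^ 2) :=
            ENNReal.ofReal_le_ofReal hle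
        _ = ‖(1:ℝ) / ‖w - c‖ ^ 2‖₊ := (Real.enorm_eq_ofReal (by positivity)).symm
    calc ENNReal.ofReal (3 / 4) * NNReal.pi
        = ENNReal.ofReal ((r n)⁻¹ ^ 2) * volume (A n) := by
          rw [hvol n, ← mul_assoc, ← ENNReal.ofReal_mul (by positivity)]
          congr 2
          field_simp
          rw [div_self (hrpos n).ne']
      _ = ∫⁻ _ in A n, ENNReal.ofReal ((r n)⁻¹ ^ 2) := by
          rw [setLIntegral_const, mul_comm]
      _ ≤ ∫⁻ w in A n, ‖(1:ℝ) / ‖w - c‖ ^ 2‖₊ := by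
          refine setLIntegral_mono' (hAmeas n) hpt
  have htop : (⊤ : ENNReal) ≤ ∫⁻ w in ball c δ, ‖(1:ℝ) / ‖w - c‖ ^ 2‖₊ := by
    have hconst : (∑' _ : ℕ, ENNReal.ofReal (3 / 4) * NNReal.pi) = ⊤ := by
      refine ENNReal.tsum_const_eq_top_of_ne_zero (mul_ne_zero ?_ ?_)
      · exact (ENNReal.ofReal_pos.2 (by norm_num)).ne'
      · exact ENNReal.coe_ne_zero.2 NNReal.pi_ne_zero
    calc (⊤ : ENNReal) = ∑' n : ℕ, ENNReal.ofReal (3 / 4) * NNReal.pi := hconst.symm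
      _ ≤ ∑' n : ℕ, ∫⁻ w in A n, ‖(1:ℝ) / ‖w - c‖ ^ 2‖₊ := ENNReal.tsum_le_tsum hterm
      _ = ∫⁻ w in ⋃ n, A n, ‖(1:ℝ) / ‖w - c‖ ^ 2‖₊ := (lintegral_iUnion hAmeas hdisj _).symm
      _ ≤ ∫⁻ w in ball c δ, ‖(1:ℝ) / ‖w - c‖ ^ 2‖₊ :=
          lintegral_mono_set (iUnion_subset hAsub)
  rw [top_le_iff] at htop
  rw [show ∫⁻ (a : ℂ) in ball c δ, ‖(1:ℝ) / ‖a - c‖ ^ 2‖ₑ = ⊤ from htop] at hfin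
  exact lt_irrefl _ hfin

set_option maxHeartbeats 1000000 in
/-- Key integrability lemma: a holomorphic function `H` on the unit bidisk with
`∫_U |H|² |z₁ - z₂|^{-2} dλ < ∞` vanishes identically on the diagonal. -/
theorem statement7 (H : ℂ × ℂ → ℂ)
    (hH : DifferentiableOn ℂ H (ball (0:ℂ) 1 ×ˢ ball (0:ℂ) 1))
    (hint : IntegrableOn (fun z : ℂ × ℂ => ‖H z‖ ^ 2 / ‖z.1 - z.2‖ ^ 2)
        (ball (0:ℂ) 1 ×ˢ ball (0:ℂ) 1)) :
    ∀ z ∈ ball (0:ℂ) 1, H (z, z) = 0 := by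
  intro z hz
  by_contra hne
  set c : ℝ := ‖H (z, z)‖ / 2 with hc
  have hcpos : 0 < c := by
    have : 0 < ‖H (z, z)‖ := norm_pos_iff.2 hne
    positivity
  have hmem : (z, z) ∈ ball (0:ℂ) 1 ×ˢ ball (0:ℂ) 1 := ⟨hz, hz⟩
  have hopen : IsOpen (ball (0:ℂ) 1 ×ˢ ball (0:ℂ) 1) := isOpen_ball.prod isOpen_ball
  have hcont : ContinuousAt H (z, z) :=
    hH.continuousOn.continuousAt (hopen.mem_nhds hmem)
  have h1 : ∀ᶠ p in nhds (z, z), c < ‖H p‖ :=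
    hcont.norm.eventually (eventually_gt_nhds (by
      rw [hc]
      exact half_lt_self (norm_pos_iff.2 hne)))
  have h2 : ∀ᶠ p in nhds (z, z), p ∈ ball (0:ℂ) 1 ×ˢ ball (0:ℂ) 1 :=
    Filter.eventually_of_mem (hopen.mem_nhds hmem) fun p hp => hp
  obtain ⟨ε, hε, hballsub⟩ := Metric.eventually_nhds_iff_ball.1 (h1.and h2)
  set s : Set ℂ := ball z ε with hs
  have hss : s ×ˢ s = ball (z, z) ε := ball_prod_same z z ε
  have hsub1 : s ×ˢ s ⊆ ball (0:ℂ) 1 ×ˢ ball (0:ℂ) 1 := by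
    rw [hss]; exact fun p hp => (hballsub p hp).2
  have hlow : ∀ p ∈ s ×ˢ s, c < ‖H p‖ := by
    rw [hss]; exact fun p hp => (hballsub p hp).1
  have hint' : IntegrableOn (fun z : ℂ × ℂ => ‖H z‖ ^ 2 / ‖z.1 - z.2‖ ^ 2) (s ×ˢ s) :=
    hint.mono_set hsub1
  -- the comparison function is integrable
  have hg : IntegrableOn (fun p : ℂ × ℂ => c ^ 2 / ‖p.1 - p.2‖ ^ 2) (s ×ˢ s) := by
    refine Integrable.mono' hint' ?_ ?_
    · exact (measurable_const.div
        (((continuous_fst.sub continuous_snd).norm.pow 2).measurable)).aestronglyMeasurable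
    · refine (ae_restrict_iff' (measurableSet_ball.prod measurableSet_ball)).2
        (Filter.Eventually.of_forall fun p hp => ?_)
      have hd : (0:ℝ) ≤ ‖p.1 - p.2‖ ^ 2 := by positivity
      rw [Real.norm_of_nonneg (by positivity)]
      rcases hd.eq_or_lt with hd0 | hd0
      · rw [← hd0]; simp
      · have h4 : c ≤ ‖H p‖ := (hlow p hp).le
        gcongr
  have hg1 : IntegrableOn (fun p : ℂ × ℂ => 1 / ‖p.1 - p.2‖ ^ 2) (s ×ˢ s) := by
    have heq : (fun p : ℂ × ℂ => 1 / ‖p.1 - p.2‖ ^ 2)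
        = fun p => (c ^ 2)⁻¹ * (c ^ 2 / ‖p.1 - p.2‖ ^ 2) := by
      funext p
      rw [← mul_div_assoc, inv_mul_cancel₀ (by positivity)]
    rw [heq]
    exact hg.const_mul _
  -- Fubini
  have hprod : Integrable (fun p : ℂ × ℂ => 1 / ‖p.1 - p.2‖ ^ 2)
      ((volume.restrict s).prod (volume.restrict s)) := by
    rw [Measure.prod_restrict, ← Measure.volume_eq_prod]
    exact hg1
  have hae := hprod.prod_right_ae
  haveI : (ae (volume.restrict s)).NeBot := by
    refine ae_neBot.2 ?_
    rw [Ne, Measure.restrict_eq_zero]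
    exact (measure_ball_pos volume z hε).ne'
  obtain ⟨x, hxint, hxs⟩ := (hae.and (ae_restrict_mem measurableSet_ball)).exists
  obtain ⟨δ', hδ', hsub'⟩ := Metric.mem_nhds_iff.1 (isOpen_ball.mem_nhds hxs)
  have hxint' : IntegrableOn (fun w : ℂ => 1 / ‖w - x‖ ^ 2) (ball x δ') := by
    have h3 : IntegrableOn (fun y : ℂ => 1 / ‖x - y‖ ^ 2) (ball x δ') :=
      IntegrableOn.mono_set hxint hsub'
    simpa [norm_sub_rev] using h3
  exact aux_notint x hδ' hxint'
end
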